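/- Let 1/4 < α < 1/2, κ > 0, and h as above. Then lim_{t→+∞} (t - h(t))/t^{4α-1} = κα²/(4α-1). -/

import Mathlib

open Real Filter MeasureTheory Set

/-- The change-of-variable function `g` (inverse of `h`). -/
noncomputable def gfun (κ α : ℝ) (u : ℝ) : ℝ :=
  ∫ s in (0:ℝ)..u, Real.sqrt (1 + 2*κ*α^2 * |s| ^ (2*(2*α-1)))

/-!
Write `c = 2κα²` and `p = 2(2α-1) ∈ (-1, 0)`. Then `g u - u = ∫₀^u (√(1 + c s^p) - 1) ds`, and
since `s^p → 0` the integrand is asymptotic to `(c/2) s^p`, whose integral `u^(p+1)/(p+1)`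
diverges; an integrated form of L'Hôpital's rule gives `(g u - u) / u^(4α-1) → κα²/(4α-1)`.
As `4α - 1 < 1`, this also shows `g u / u → 1`, so `u^(4α-1)` may be replaced by `(g u)^(4α-1)`,
and substituting `u = h t` (which tends to `∞` because `g` is monotone) gives the claim.
-/

open Topology Asymptotics

theorem Monotone.tendsto_atTop_of_rightInverse {α β : Type*} [LinearOrder α] [Preorder β]
    [NoMaxOrder β] {g : α → β} {h : β → α} (hg : Monotone g) (hgh : Function.RightInverse h g) :
    Tendsto h atTop atTop :=
  tendsto_atTop.2 fun b => (eventually_gt_atTop (g b)).mono fun t ht =>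
    le_of_not_gt fun hlt => ht.not_ge (hgh t ▸ hg hlt.le)

theorem isLittleO_integral_of_isLittleO {e g : ℝ → ℝ} {a : ℝ}
    (he : ∀ b, IntervalIntegrable e volume a b) (hg : ∀ b, IntervalIntegrable g volume a b)
    (hg_nonneg : ∀ᶠ s in atTop, 0 ≤ g s)
    (hg_top : Tendsto (fun b => ∫ s in a..b, g s) atTop atTop) (heg : e =o[atTop] g) :
    (fun b => ∫ s in a..b, e s) =o[atTop] fun b => ∫ s in a..b, g s := by
  refine isLittleO_iff.2 fun ε hε => ?_
  obtain ⟨A, hA⟩ := eventually_atTop.1 ((heg.bound (half_pos hε)).and hg_nonneg)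
  have hconst : ∀ᶠ b in atTop,
      ‖∫ s in a..A, e s‖ - ε / 2 * ∫ s in a..A, g s ≤ ε / 2 * ∫ s in a..b, g s :=
    (hg_top.const_mul_atTop (half_pos hε)).eventually_ge_atTop _
  filter_upwards [hconst, hg_top.eventually_ge_atTop 0, eventually_ge_atTop A] with b hb hb0 hAb
  have htail : ‖∫ s in A..b, e s‖ ≤ ∫ s in A..b, ε / 2 * g s := by
    refine intervalIntegral.norm_integral_le_of_norm_le hAb (ae_of_all _ fun s hs => ?_)
      (((hg A).symm.trans (hg b)).const_mul _)
    have := (hA s hs.1.le).1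
    rwa [Real.norm_of_nonneg (hA s hs.1.le).2] at this
  rw [intervalIntegral.integral_const_mul,
    ← intervalIntegral.integral_interval_sub_left (hg b) (hg A)] at htail
  rw [← intervalIntegral.integral_add_adjacent_intervals (he A) ((he A).symm.trans (he b)),
    Real.norm_of_nonneg hb0]
  calc ‖(∫ s in a..A, e s) + ∫ s in A..b, e s‖
      ≤ ‖∫ s in a..A, e s‖ + ‖∫ s in A..b, e s‖ := norm_add_le _ _
    _ ≤ ε * ∫ s in a..b, g s := by linarith

theorem tendsto_integral_div_integral_of_tendsto_div {f g : ℝ → ℝ} {a L : ℝ}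
    (hf : ∀ b, IntervalIntegrable f volume a b) (hg : ∀ b, IntervalIntegrable g volume a b)
    (hg_pos : ∀ᶠ s in atTop, 0 < g s)
    (hg_top : Tendsto (fun b => ∫ s in a..b, g s) atTop atTop)
    (hfg : Tendsto (fun s => f s / g s) atTop (𝓝 L)) :
    Tendsto (fun b => (∫ s in a..b, f s) / ∫ s in a..b, g s) atTop (𝓝 L) := by
  have hfLg : (fun s => f s - L * g s) =o[atTop] g := by
    refine (isLittleO_iff_tendsto' (hg_pos.mono fun s hs h0 => absurd h0 hs.ne')).2 ?_
    refine (sub_self L ▸ hfg.sub_const L).congr' (hg_pos.mono fun s hs => ?_)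
    field_simp
  have hint := (isLittleO_integral_of_isLittleO (fun b => (hf b).sub ((hg b).const_mul L)) hg
    (hg_pos.mono fun _ => le_of_lt) hg_top hfLg).tendsto_div_nhds_zero.const_add L
  rw [add_zero] at hint
  refine hint.congr' ((hg_top.eventually_gt_atTop 0).mono fun b hb => ?_)
  rw [intervalIntegral.integral_sub (hf b) ((hg b).const_mul L),
    intervalIntegral.integral_const_mul]
  field_simp
  ring

theorem tendsto_div_rpow_add_self {F : ℝ → ℝ} {P L : ℝ} (hP : P < 1)
    (hF : Tendsto (fun u => F u / u ^ P) atTop (𝓝 L)) :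
    Tendsto (fun u => F u / (u + F u) ^ P) atTop (𝓝 L) := by
  have hratio : Tendsto (fun u => (u + F u) / u) atTop (𝓝 1) := by
    have h := (hF.mul (tendsto_rpow_neg_atTop (sub_pos.2 hP))).const_add 1
    rw [mul_zero, add_zero] at h
    refine h.congr' ((eventually_gt_atTop 0).mono fun u hu => ?_)
    rw [neg_sub, rpow_sub hu, rpow_one]
    field_simp
  have hpow : Tendsto (fun u => ((u + F u) / u) ^ P) atTop (𝓝 1) := by
    simpa using hratio.rpow_const (Or.inl one_ne_zero)
  have h := hF.div hpow one_ne_zero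
  rw [div_one] at h
  refine h.congr' ?_
  filter_upwards [eventually_gt_atTop 0, hratio.eventually (lt_mem_nhds zero_lt_one)]
    with u hu hpos
  have hsum : 0 < u + F u := by simpa [div_pos_iff, hu, not_lt_of_gt hu] using hpos
  rw [Pi.div_apply, div_rpow hsum.le hu.le]
  field_simp

theorem intervalIntegrable_abs_rpow {p : ℝ} (hp : -1 < p) (a b : ℝ) :
    IntervalIntegrable (fun s => |s| ^ p) volume a b := by
  have hpos : ∀ c, 0 ≤ c → IntervalIntegrable (fun s => |s| ^ p) volume 0 c := fun c hc =>
    (intervalIntegral.intervalIntegrable_rpow' hp).congr_ae <| by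
      rw [uIoc_of_le hc]
      exact (ae_restrict_iff' measurableSet_Ioc).2 (ae_of_all _ fun s hs => by
        simp only [abs_of_pos hs.1])
  have hall : ∀ c, IntervalIntegrable (fun s => |s| ^ p) volume 0 c := fun c => by
    rcases le_total 0 c with hc | hc
    · exact hpos c hc
    · rw [IntervalIntegrable.iff_comp_neg]
      simpa using hpos (-c) (neg_nonneg.2 hc)
  exact (hall a).symm.trans (hall b)

theorem intervalIntegrable_sqrt_one_add_mul_abs_rpow {c p : ℝ} (hc : 0 ≤ c) (hp : -1 < p)
    (a b : ℝ) : IntervalIntegrable (fun s => √(1 + c * |s| ^ p)) volume a b := by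
  refine ((intervalIntegrable_const (c := 1)).add
    ((intervalIntegrable_abs_rpow hp a b).const_mul (c / 2))).mono_fun
    (Measurable.aestronglyMeasurable (by fun_prop)) (ae_of_all _ fun s => ?_)
  have hx : 0 ≤ c * |s| ^ p := by positivity
  simp only [Real.norm_of_nonneg (sqrt_nonneg _),
    Real.norm_of_nonneg (by positivity : 0 ≤ 1 + c / 2 * |s| ^ p)]
  linarith [sqrt_one_add_le (x := c * |s| ^ p) (by linarith)]

theorem monotone_integral_of_nonneg {f : ℝ → ℝ} {a : ℝ} (hf : ∀ b, IntervalIntegrable f volume a b)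
    (hf0 : 0 ≤ f) : Monotone fun b => ∫ s in a..b, f s := fun b b' hbb' => by
  rw [← sub_nonneg, intervalIntegral.integral_interval_sub_left (hf b') (hf b)]
  exact intervalIntegral.integral_nonneg hbb' fun s _ => hf0 s

theorem tendsto_sqrt_one_add_mul_abs_rpow_sub_one_div {c p : ℝ} (hc : 0 ≤ c) (hp : p < 0) :
    Tendsto (fun s => (√(1 + c * |s| ^ p) - 1) / s ^ p) atTop (𝓝 (c / 2)) := by
  have hpow : Tendsto (fun s : ℝ => s ^ p) atTop (𝓝 0) := by
    simpa using tendsto_rpow_neg_atTop (neg_pos.2 hp)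
  have hlim : Tendsto (fun s => c / (1 + √(1 + c * s ^ p))) atTop (𝓝 (c / 2)) := by
    have := ((hpow.const_mul c).const_add 1).sqrt.const_add 1
    norm_num at this
    exact tendsto_const_nhds.div this two_ne_zero
  -- `√(1 + x) - 1 = x / (1 + √(1 + x))`
  refine hlim.congr' ((eventually_gt_atTop 0).mono fun s hs => ?_)
  have hx : 0 ≤ c * s ^ p := by positivity
  have hsq := sq_sqrt (show 0 ≤ 1 + c * s ^ p by linarith)
  simp only [abs_of_pos hs]
  field_simp
  linear_combination -hsq

theorem tendsto_integral_sqrt_one_add_mul_abs_rpow_sub_div {c p : ℝ} (hc : 0 ≤ c) (hp1 : -1 < p)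
    (hp0 : p < 0) :
    Tendsto (fun u => ((∫ s in 0..u, √(1 + c * |s| ^ p)) - u) / u ^ (p + 1)) atTop
      (𝓝 (c / 2 / (p + 1))) := by
  have hp1' : 0 < p + 1 := by linarith
  have hpow_int : ∀ b, IntervalIntegrable (fun s => s ^ p) volume 0 b := fun _ =>
    intervalIntegral.intervalIntegrable_rpow' hp1
  have hpow_integral : ∀ u, ∫ s in 0..u, s ^ p = u ^ (p + 1) / (p + 1) := fun u => by
    rw [integral_rpow (Or.inl hp1), zero_rpow hp1'.ne', sub_zero]
  have hpow_top : Tendsto (fun u => ∫ s in 0..u, s ^ p) atTop atTop := by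
    simpa only [hpow_integral] using (tendsto_rpow_atTop hp1').atTop_div_const hp1'
  have h := (tendsto_integral_div_integral_of_tendsto_div
    (fun b => (intervalIntegrable_sqrt_one_add_mul_abs_rpow hc hp1 0 b).sub
      (intervalIntegrable_const (c := 1)))
    hpow_int ((eventually_gt_atTop 0).mono fun s hs => rpow_pos_of_pos hs p) hpow_top
    (tendsto_sqrt_one_add_mul_abs_rpow_sub_one_div hc hp0)).div_const (p + 1)
  refine h.congr' ((eventually_gt_atTop 0).mono fun u hu => ?_)
  rw [intervalIntegral.integral_sub (intervalIntegrable_sqrt_one_add_mul_abs_rpow hc hp1 0 u)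
    intervalIntegrable_const, hpow_integral, intervalIntegral.integral_const]
  field_simp
  simp

theorem tendsto_gfun_sub_div_rpow {κ α : ℝ} (hκ : 0 < κ) (hα0 : 1/4 < α) (hα1 : α < 1/2) :
    Tendsto (fun u => (gfun κ α u - u) / u ^ (4*α-1)) atTop (𝓝 (κ*α^2/(4*α-1))) := by
  have h := tendsto_integral_sqrt_one_add_mul_abs_rpow_sub_div (c := 2*κ*α^2) (by positivity)
    (p := 2*(2*α-1)) (by linarith) (by linarith)
  rwa [show 2*(2*α-1) + 1 = 4*α-1 by ring, show 2*κ*α^2 / 2 = κ*α^2 by ring] at h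

theorem stmt14_general (κ α : ℝ) (hκ : 0 < κ) (hα0 : 1/4 < α) (hα1 : α < 1/2) (h : ℝ → ℝ)
    (hinv2 : Function.RightInverse h (gfun κ α)) :
    Filter.Tendsto (fun t : ℝ => (t - h t) / t ^ (4*α-1)) Filter.atTop
      (nhds (κ*α^2/(4*α-1))) := by
  have hgfun_mono : Monotone (gfun κ α) :=
    monotone_integral_of_nonneg
      (intervalIntegrable_sqrt_one_add_mul_abs_rpow (by positivity) (by linarith) 0)
      fun _ => sqrt_nonneg _
  have hlim := tendsto_div_rpow_add_self (by linarith) (tendsto_gfun_sub_div_rpow hκ hα0 hα1)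
  refine (hlim.comp (hgfun_mono.tendsto_atTop_of_rightInverse hinv2)).congr fun t => ?_
  simp [hinv2 t]

theorem stmt14 (κ α : ℝ) (hκ : 0 < κ) (hα0 : 1/4 < α) (hα1 : α < 1/2) (h : ℝ → ℝ)
    (hinv1 : Function.LeftInverse h (gfun κ α)) (hinv2 : Function.RightInverse h (gfun κ α)) :
    Filter.Tendsto (fun t : ℝ => (t - h t) / t ^ (4*α-1)) Filter.atTop
      (nhds (κ*α^2/(4*α-1))) :=
  stmt14_general κ α hκ hα0 hα1 h hinv2
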